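/- Let K be the reference prism and Q_K = P₂(ℝ³) ⊕ span{z(z²−1)}. Let F₁ = {(x,y,z) : x+y=1, 0≤x≤1, -1≤z≤1} be the side face opposite V₁, with edge direction t₁ = (−1,1,0)/√2 (pointing from V₂ toward V₃). Then for all v ∈ Q_K: (1/|V₂V₅|) ∫_{F₁} ∂v/∂t₁ dσ = (1/2)(v(V₃) + v(V₆) − v(V₂) − v(V₅)) and (1/|V₂V₃|) ∫_{F₁} ∂v/∂z dσ = (1/2)(v(V₅) + v(V₆) − v(V₂) − v(V₃)), where |V₂V₅| = 2 and |V₂V₃| = √2. -/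

import Mathlib

noncomputable section

def pdx (f : ℝ → ℝ → ℝ → ℝ) (a b c : ℝ) : ℝ := deriv (fun t => f t b c) a
def pdy (f : ℝ → ℝ → ℝ → ℝ) (a b c : ℝ) : ℝ := deriv (fun t => f a t c) b
def pdz (f : ℝ → ℝ → ℝ → ℝ) (a b c : ℝ) : ℝ := deriv (fun t => f a b t) c

def InQK (v : ℝ → ℝ → ℝ → ℝ) : Prop :=
  ∃ (p : MvPolynomial (Fin 3) ℝ) (c : ℝ), p.totalDegree ≤ 2 ∧
    ∀ x y z : ℝ, v x y z = MvPolynomial.eval ![x, y, z] p + c * (z * (z^2 - 1))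

lemma hasDerivAt_cubic (A B C D t : ℝ) :
    HasDerivAt (fun s : ℝ => A + B*s + C*s^2 + D*s^3) (B + 2*C*t + 3*D*t^2) t := by
  have h1 : HasDerivAt (fun s : ℝ => s) 1 t := hasDerivAt_id t
  have h := (((h1.const_mul B).const_add A).add ((h1.pow 2).const_mul C)).add
    ((h1.pow 3).const_mul D)
  refine h.congr_deriv ?_
  push_cast
  ring

lemma integ_cubic (A B C D a b : ℝ) :
    ∫ t in a..b, (A + B*t + C*t^2 + D*t^3)
      = A*(b-a) + B*(b^2-a^2)/2 + C*(b^3-a^3)/3 + D*(b^4-a^4)/4 := by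
  have h : ∀ t ∈ Set.uIcc a b, HasDerivAt
      (fun s : ℝ => A*s + (B/2)*s^2 + (C/3)*s^3 + (D/4)*s^4) (A + B*t + C*t^2 + D*t^3) t := by
    intro t _
    have h1 : HasDerivAt (fun s : ℝ => s) 1 t := hasDerivAt_id t
    have h := (((h1.const_mul A).add ((h1.pow 2).const_mul (B/2))).add
      ((h1.pow 3).const_mul (C/3))).add ((h1.pow 4).const_mul (D/4))
    refine h.congr_deriv ?_
    push_cast
    ring
  rw [intervalIntegral.integral_eq_sub_of_hasDerivAt h (by
    apply Continuous.intervalIntegrable; continuity)]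
  ring

open MvPolynomial Finsupp Finset in
lemma decomp (p : MvPolynomial (Fin 3) ℝ) (hp : p.totalDegree ≤ 2) :
    ∃ a0 a1 a2 a3 a4 a5 a6 a7 a8 a9 : ℝ, ∀ x y z : ℝ,
      MvPolynomial.eval ![x,y,z] p = a0 + a1*x + a2*y + a3*z + a4*x^2 + a5*y^2 + a6*z^2
        + a7*(x*y) + a8*(x*z) + a9*(y*z) := by
  classical
  set g : ℕ × ℕ × ℕ → (Fin 3 →₀ ℕ) :=
    fun t => Finsupp.single 0 t.1 + Finsupp.single 1 t.2.1 + Finsupp.single 2 t.2.2 with hg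
  have hgapp : ∀ t : ℕ × ℕ × ℕ, (g t) 0 = t.1 ∧ (g t) 1 = t.2.1 ∧ (g t) 2 = t.2.2 := by
    intro t; simp [hg, Finsupp.single_apply]
  set T : Finset (ℕ×ℕ×ℕ) :=
    {(0,0,0),(1,0,0),(0,1,0),(0,0,1),(2,0,0),(0,2,0),(0,0,2),(1,1,0),(1,0,1),(0,1,1)} with hT
  have hsub : p.support ⊆ T.image g := by
    intro d hd
    have hds : (d.sum fun _ e => e) ≤ 2 :=
      le_trans (MvPolynomial.le_totalDegree hd) hp
    rw [Finsupp.sum_fintype _ _ (fun _ => rfl), Fin.sum_univ_three] at hds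
    refine Finset.mem_image.2 ⟨(d 0, d 1, d 2), ?_, ?_⟩
    · simp only [hT, Finset.mem_insert, Finset.mem_singleton, Prod.mk.injEq]
      omega
    · ext i
      fin_cases i
      · simpa using (hgapp (d 0, d 1, d 2)).1
      · simpa using (hgapp (d 0, d 1, d 2)).2.1
      · simpa using (hgapp (d 0, d 1, d 2)).2.2
  have key : ∀ x y z : ℝ, MvPolynomial.eval ![x,y,z] p
      = ∑ t ∈ T, MvPolynomial.coeff (g t) p * (x ^ t.1 * y ^ t.2.1 * z ^ t.2.2) := by
    intro x y z
    rw [MvPolynomial.eval_eq']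
    rw [Finset.sum_subset hsub (fun d _ hd => by
      rw [MvPolynomial.notMem_support_iff.1 hd, zero_mul])]
    rw [Finset.sum_image (fun s _ t _ h => by
      have h0 := congrArg (fun m => (m : (Fin 3 →₀ ℕ)) 0) h
      have h1 := congrArg (fun m => (m : (Fin 3 →₀ ℕ)) 1) h
      have h2 := congrArg (fun m => (m : (Fin 3 →₀ ℕ)) 2) h
      simp only [(hgapp s).1, (hgapp s).2.1, (hgapp s).2.2,
        (hgapp t).1, (hgapp t).2.1, (hgapp t).2.2] at h0 h1 h2
      exact Prod.ext h0 (Prod.ext h1 h2))]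
    refine Finset.sum_congr rfl fun t _ => ?_
    rw [Fin.prod_univ_three, (hgapp t).1, (hgapp t).2.1, (hgapp t).2.2]
    simp
  refine ⟨MvPolynomial.coeff (g (0,0,0)) p, MvPolynomial.coeff (g (1,0,0)) p,
    MvPolynomial.coeff (g (0,1,0)) p, MvPolynomial.coeff (g (0,0,1)) p,
    MvPolynomial.coeff (g (2,0,0)) p, MvPolynomial.coeff (g (0,2,0)) p,
    MvPolynomial.coeff (g (0,0,2)) p, MvPolynomial.coeff (g (1,1,0)) p,
    MvPolynomial.coeff (g (1,0,1)) p, MvPolynomial.coeff (g (0,1,1)) p, fun x y z => ?_⟩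
  rw [key, hT]
  rw [Finset.sum_insert (by decide), Finset.sum_insert (by decide), Finset.sum_insert (by decide),
    Finset.sum_insert (by decide), Finset.sum_insert (by decide), Finset.sum_insert (by decide),
    Finset.sum_insert (by decide), Finset.sum_insert (by decide), Finset.sum_insert (by decide),
    Finset.sum_singleton]
  ring

/-- Tangential-derivative face identities on the side face
`F₁ = {x+y=1, 0≤x≤1, -1≤z≤1}` (surface element `dσ = √2 dx dz`), with edge
direction `t₁ = (−1,1,0)/√2`, `|V₂V₅| = 2` and `|V₂V₃| = √2`:
for all `v ∈ Q_K`,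
`(1/|V₂V₅|)∫_{F₁} ∂v/∂t₁ dσ = (v(V₃)+v(V₆)−v(V₂)−v(V₅))/2` and
`(1/|V₂V₃|)∫_{F₁} ∂v/∂z dσ = (v(V₅)+v(V₆)−v(V₂)−v(V₃))/2`. -/
theorem side_face_tangential_derivative (v : ℝ → ℝ → ℝ → ℝ) (hv : InQK v) :
    (1 / (2:ℝ)) * (Real.sqrt 2 * ∫ x in (0:ℝ)..1, ∫ z in (-1:ℝ)..1,
        ((-1 / Real.sqrt 2) * pdx v x (1-x) z
          + (1 / Real.sqrt 2) * pdy v x (1-x) z)) =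
      (1/2) * (v 0 1 (-1) + v 0 1 1 - v 1 0 (-1) - v 1 0 1) ∧
    (1 / Real.sqrt 2) * (Real.sqrt 2 * ∫ x in (0:ℝ)..1, ∫ z in (-1:ℝ)..1,
        pdz v x (1-x) z) =
      (1/2) * (v 1 0 1 + v 0 1 1 - v 1 0 (-1) - v 0 1 (-1)) := by
  obtain ⟨p, c, hdeg, hvp⟩ := hv
  obtain ⟨a0, a1, a2, a3, a4, a5, a6, a7, a8, a9, hQ⟩ := decomp p hdeg
  have hvfun : ∀ x y z : ℝ, v x y z = a0 + a1*x + a2*y + a3*z + a4*x^2 + a5*y^2 + a6*z^2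
      + a7*(x*y) + a8*(x*z) + a9*(y*z) + c*(z*(z^2-1)) := by
    intro x y z; rw [hvp, hQ]
  have h0 : Real.sqrt 2 ≠ 0 := by positivity
  have hpdx : ∀ x y z : ℝ, pdx v x y z = a1 + 2*a4*x + a7*y + a8*z := by
    intro x y z; unfold pdx
    have he : (fun t => v t y z) = fun t =>
        (a0 + a2*y + a3*z + a5*y^2 + a6*z^2 + a9*(y*z) + c*(z*(z^2-1)))
          + (a1 + a7*y + a8*z)*t + a4*t^2 + 0*t^3 := by
      funext t; rw [hvfun]; ring
    rw [he, (hasDerivAt_cubic _ _ _ _ x).deriv]; ring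
  have hpdy : ∀ x y z : ℝ, pdy v x y z = a2 + a7*x + 2*a5*y + a9*z := by
    intro x y z; unfold pdy
    have he : (fun t => v x t z) = fun t =>
        (a0 + a1*x + a3*z + a4*x^2 + a6*z^2 + a8*(x*z) + c*(z*(z^2-1)))
          + (a2 + a7*x + a9*z)*t + a5*t^2 + 0*t^3 := by
      funext t; rw [hvfun]; ring
    rw [he, (hasDerivAt_cubic _ _ _ _ y).deriv]; ring
  have hpdz : ∀ x y z : ℝ, pdz v x y z = a3 + a8*x + a9*y - c + 2*a6*z + 3*c*z^2 := by
    intro x y z; unfold pdz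
    have he : (fun t => v x y t) = fun t =>
        (a0 + a1*x + a2*y + a4*x^2 + a5*y^2 + a7*(x*y))
          + (a3 + a8*x + a9*y - c)*t + a6*t^2 + c*t^3 := by
      funext t; rw [hvfun]; ring
    rw [he, (hasDerivAt_cubic _ _ _ _ z).deriv]
  constructor
  · have hinner : ∀ x : ℝ, (∫ z in (-1:ℝ)..1,
        ((-1 / Real.sqrt 2) * pdx v x (1-x) z + (1 / Real.sqrt 2) * pdy v x (1-x) z))
        = (1/Real.sqrt 2) * ((a2 - a1 - a7 + 2*a5) + (2*a7 - 2*a5 - 2*a4)*x) * 2 := by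
      intro x
      have hcong : ∀ z ∈ Set.uIcc (-1:ℝ) 1,
          ((-1 / Real.sqrt 2) * pdx v x (1-x) z + (1 / Real.sqrt 2) * pdy v x (1-x) z)
          = ((-1 / Real.sqrt 2) * (a1 + 2*a4*x + a7*(1-x))
              + (1 / Real.sqrt 2) * (a2 + a7*x + 2*a5*(1-x)))
            + ((-1 / Real.sqrt 2) * a8 + (1 / Real.sqrt 2) * a9)*z + 0*z^2 + 0*z^3 := by
        intro z _; rw [hpdx, hpdy]; ring
      rw [intervalIntegral.integral_congr hcong, integ_cubic]
      field_simp
      ring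
    have houter : ∀ x ∈ Set.uIcc (0:ℝ) 1,
        (1/Real.sqrt 2) * ((a2 - a1 - a7 + 2*a5) + (2*a7 - 2*a5 - 2*a4)*x) * 2
        = ((1/Real.sqrt 2) * (a2 - a1 - a7 + 2*a5) * 2)
          + ((1/Real.sqrt 2) * (2*a7 - 2*a5 - 2*a4) * 2)*x + 0*x^2 + 0*x^3 := by
      intro x _; ring
    rw [intervalIntegral.integral_congr (fun x hx => (hinner x).trans (houter x hx)), integ_cubic]
    simp only [hvfun]
    have h2 : Real.sqrt 2 * Real.sqrt 2 = 2 := Real.mul_self_sqrt (by norm_num)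
    field_simp
    ring
  · have hinner : ∀ x : ℝ, (∫ z in (-1:ℝ)..1, pdz v x (1-x) z)
        = 2*a3 + 2*a8*x + 2*a9*(1-x) := by
      intro x
      have hcong : ∀ z ∈ Set.uIcc (-1:ℝ) 1, pdz v x (1-x) z
          = (a3 + a8*x + a9*(1-x) - c) + (2*a6)*z + (3*c)*z^2 + 0*z^3 := by
        intro z _; rw [hpdz]; ring
      rw [intervalIntegral.integral_congr hcong, integ_cubic]
      ring
    have houter : ∀ x ∈ Set.uIcc (0:ℝ) 1,
        2*a3 + 2*a8*x + 2*a9*(1-x) = (2*a3 + 2*a9) + (2*a8 - 2*a9)*x + 0*x^2 + 0*x^3 := by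
      intro x _; ring
    rw [intervalIntegral.integral_congr (fun x hx => (hinner x).trans (houter x hx)), integ_cubic]
    simp only [hvfun]
    have h2 : Real.sqrt 2 * Real.sqrt 2 = 2 := Real.mul_self_sqrt (by norm_num)
    field_simp
    ring
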